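/- arXiv:1410.2054 — 2 statements merged into one kernel-verified Lean document; each statement's English description precedes it below -/
import Mathlib

section
/- For any multiplicative arithmetic function f and fixed integer m, the function n ↦ Σ_{k=1}^n f(gcd(k,n))·e^{-2πikm/n} is multiplicative in n. -/
/-!
The summand `f (gcd k n) * e(-k m / n)` is `n`-periodic in `k`, so the sum may run over
`0 ≤ k < n`. For coprime `u, v` the Chinese remainder theorem makes
`(a, b) ↦ a v + b u (mod u v)` a bijection `[0, u) × [0, v) → [0, u v)`, and along it the
summand for `u v` splits as the product of the summands for `u` and `v`: the gcd factors as
`gcd(a v + b u, u v) = gcd(a, u) · gcd(b, v)` into coprime parts, and the exponent as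
`(a v + b u) m / (u v) = a m / u + b m / v`.
-/

open Finset

theorem Function.Periodic.sum_Icc_one_eq_sum_range {M : Type*} [AddCommMonoid M] {F : ℕ → M}
    {n : ℕ} (hF : Function.Periodic F n) : ∑ k ∈ Icc 1 n, F k = ∑ k ∈ range n, F k := by
  rcases n with _ | N
  · rfl
  calc ∑ k ∈ Icc 1 (N + 1), F k = ∑ k ∈ range (N + 1), F (k + 1) := by
        rw [range_eq_Ico, sum_Ico_add', zero_add, Ico_add_one_right_eq_Icc]
    _ = ∑ k ∈ range N, F (k + 1) + F 0 := by rw [sum_range_succ, ← hF 0, zero_add]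
    _ = ∑ k ∈ range (N + 1), F k := (sum_range_succ' F N).symm

namespace Nat.Coprime

variable {u v : ℕ}

theorem eq_of_mul_add_mul_modEq (huv : u.Coprime v) {a a' b b' : ℕ} (ha : a < u) (ha' : a' < u)
    (h : a * v + b * u ≡ a' * v + b' * u [MOD u]) : a = a' := by
  have hav : a * v ≡ a' * v [MOD u] := by
    simpa only [Nat.ModEq, Nat.add_mul_mod_self_right] using h
  exact (hav.cancel_right_of_coprime huv).eq_of_lt_of_lt ha ha'

theorem bijOn_mul_add_mul_mod (huv : u.Coprime v) :
    Set.BijOn (fun p : ℕ × ℕ => (p.1 * v + p.2 * u) % (u * v))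
      (range u ×ˢ range v : Finset (ℕ × ℕ)) (range (u * v)) := by
  have hmaps : Set.MapsTo (fun p : ℕ × ℕ => (p.1 * v + p.2 * u) % (u * v))
      (range u ×ˢ range v : Finset (ℕ × ℕ)) (range (u * v)) := fun p hp => by
    have hpos : 0 < u * v := by
      simp only [coe_product, Set.mem_prod, mem_coe, mem_range] at hp
      exact Nat.mul_pos (by omega) (by omega)
    exact mem_range.2 (Nat.mod_lt _ hpos)
  have hinj : Set.InjOn (fun p : ℕ × ℕ => (p.1 * v + p.2 * u) % (u * v))
      (range u ×ˢ range v : Finset (ℕ × ℕ)) := by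
    rintro ⟨a, b⟩ hab ⟨a', b'⟩ hab' (h : _ ≡ _ [MOD u * v])
    simp only [coe_product, Set.mem_prod, mem_coe, mem_range] at hab hab'
    have hb : b * u + a * v ≡ b' * u + a' * v [MOD v] := by
      rw [add_comm, add_comm (b' * u)]
      exact h.of_mul_left u
    exact Prod.ext (huv.eq_of_mul_add_mul_modEq hab.1 hab'.1 (h.of_mul_right v))
      (huv.symm.eq_of_mul_add_mul_modEq hab.2 hab'.2 hb)
  refine ⟨hmaps, hinj, surjOn_of_injOn_of_card_le _ hmaps hinj ?_⟩
  simp only [card_range, card_product, le_refl]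

theorem gcd_mul_add_mul (huv : u.Coprime v) (a b : ℕ) :
    (a * v + b * u).gcd (u * v) = a.gcd u * b.gcd v := by
  rw [Nat.Coprime.gcd_mul _ huv, Nat.gcd_add_mul_right_left, add_comm,
    Nat.gcd_add_mul_right_left, huv.symm.gcd_mul_right_cancel, huv.gcd_mul_right_cancel]

end Nat.Coprime

theorem Function.Periodic.sum_range_mul_eq_sum_sum {M : Type*} [AddCommMonoid M] {F : ℕ → M}
    {u v : ℕ} (huv : u.Coprime v) (hF : Function.Periodic F (u * v)) :
    ∑ k ∈ range (u * v), F k = ∑ a ∈ range u, ∑ b ∈ range v, F (a * v + b * u) := by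
  have hbij := huv.bijOn_mul_add_mul_mod
  rw [← sum_product']
  exact (sum_nbij _ hbij.mapsTo hbij.injOn hbij.surjOn
    fun p _ => (hF.map_mod_nat _).symm).symm

noncomputable def gcdFourierTerm (f : ℕ → ℂ) (m n k : ℕ) : ℂ :=
  f (Nat.gcd k n) * Complex.exp (-(2 * Real.pi * Complex.I * k * m / n))

theorem gcdFourierTerm_periodic (f : ℕ → ℂ) (m n : ℕ) :
    Function.Periodic (gcdFourierTerm f m n) n := by
  intro k
  rcases eq_or_ne n 0 with rfl | hn
  · rfl
  have hexp : -(2 * Real.pi * Complex.I * ((k + n : ℕ) : ℂ) * m / n) =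
      -(2 * Real.pi * Complex.I * k * m / n) - m * (2 * Real.pi * Complex.I) := by
    push_cast
    field_simp
    ring
  rw [gcdFourierTerm, hexp, Complex.exp_sub, Complex.exp_nat_mul_two_pi_mul_I, div_one,
    Nat.gcd_add_self_left, gcdFourierTerm]

theorem gcdFourierTerm_mul_add_mul {f : ℕ → ℂ}
    (hf : ∀ a b : ℕ, Nat.Coprime a b → f (a * b) = f a * f b) (m : ℕ) {u v : ℕ}
    (hu : u ≠ 0) (hv : v ≠ 0) (huv : u.Coprime v) (a b : ℕ) :
    gcdFourierTerm f m (u * v) (a * v + b * u) =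
      gcdFourierTerm f m u a * gcdFourierTerm f m v b := by
  have hcop : (a.gcd u).Coprime (b.gcd v) :=
    (huv.coprime_dvd_left (Nat.gcd_dvd_right a u)).coprime_dvd_right (Nat.gcd_dvd_right b v)
  have hexp : Complex.exp (-(2 * Real.pi * Complex.I * ((a * v + b * u : ℕ) : ℂ) * m /
      ((u * v : ℕ) : ℂ))) = Complex.exp (-(2 * Real.pi * Complex.I * a * m / u)) *
        Complex.exp (-(2 * Real.pi * Complex.I * b * m / v)) := by
    rw [← Complex.exp_add]
    congr 1
    push_cast
    field_simp
    ring
  rw [gcdFourierTerm, huv.gcd_mul_add_mul, hf _ _ hcop, hexp, gcdFourierTerm, gcdFourierTerm]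
  ring

theorem dft_f_gcd_multiplicative_general (f : ℕ → ℂ)
    (hf : ∀ a b : ℕ, Nat.Coprime a b → f (a * b) = f a * f b)
    (m u v : ℕ) (hu : 0 < u) (hv : 0 < v) (huv : Nat.Coprime u v) :
    (∑ k ∈ Finset.Icc 1 u, f (Nat.gcd k u) *
        Complex.exp (-(2 * Real.pi * Complex.I * k * m / u))) *
    (∑ k ∈ Finset.Icc 1 v, f (Nat.gcd k v) *
        Complex.exp (-(2 * Real.pi * Complex.I * k * m / v))) =
    ∑ k ∈ Finset.Icc 1 (u * v), f (Nat.gcd k (u * v)) *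
        Complex.exp (-(2 * Real.pi * Complex.I * k * m / (u * v))) := by
  rw [← Nat.cast_mul u v]
  change (∑ k ∈ Icc 1 u, gcdFourierTerm f m u k) * (∑ k ∈ Icc 1 v, gcdFourierTerm f m v k) =
    ∑ k ∈ Icc 1 (u * v), gcdFourierTerm f m (u * v) k
  rw [(gcdFourierTerm_periodic f m u).sum_Icc_one_eq_sum_range,
    (gcdFourierTerm_periodic f m v).sum_Icc_one_eq_sum_range,
    (gcdFourierTerm_periodic f m (u * v)).sum_Icc_one_eq_sum_range,
    (gcdFourierTerm_periodic f m (u * v)).sum_range_mul_eq_sum_sum huv, sum_mul_sum]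
  simp only [gcdFourierTerm_mul_add_mul hf m hu.ne' hv.ne' huv]

theorem dft_f_gcd_multiplicative (f : ℕ → ℂ) (hf1 : f 1 = 1)
    (hf : ∀ a b : ℕ, Nat.Coprime a b → f (a * b) = f a * f b)
    (m u v : ℕ) (hu : 0 < u) (hv : 0 < v) (huv : Nat.Coprime u v) :
    (∑ k ∈ Finset.Icc 1 u, f (Nat.gcd k u) *
        Complex.exp (-(2 * Real.pi * Complex.I * k * m / u))) *
    (∑ k ∈ Finset.Icc 1 v, f (Nat.gcd k v) *
        Complex.exp (-(2 * Real.pi * Complex.I * k * m / v))) =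
    ∑ k ∈ Finset.Icc 1 (u * v), f (Nat.gcd k (u * v)) *
        Complex.exp (-(2 * Real.pi * Complex.I * k * m / (u * v))) :=
  dft_f_gcd_multiplicative_general f hf m u v hu hv huv
end

section
/- If n = ∏_{j=1}^r p_j^{s_j} is the prime factorization of n (with s_j ≥ 1), and m = u·∏_{i=1}^r p_i^{t_i} with gcd(u, p_i) = 1 for all i, then Σ_{k=1}^n gcd(k,n)·e^{-2πikm/n} = ∏_{i=1}^r [(min(t_i,s_i)+1)·φ(p_i^{s_i}) + [t_i ≥ s_i]·p_i^{s_i-1}]. -/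
/-!
Write `gcd k n = ∑_{d ∣ gcd k n} φ d` and exchange the sums: with `ζ = e^{-2πi/n}` the left
side becomes `∑_{d ∣ n} φ d ∑_{j ≤ n/d} (ζ^d)^{jm}`, and the inner sum runs over all powers of
the primitive `(n/d)`-th root `ζ^d`, so it is `n/d` if `n/d ∣ m` and `0` otherwise. Thus the
left side is `(φ * g) n` with `g e = e · [e ∣ m]`, a Dirichlet convolution of multiplicative
functions; at `p^s` only the terms with `p^{s-j} ∣ m`, i.e. `j ≥ s - t`, survive, each
contributing `φ(p^s)`, plus an extra `p^{s-1}` from `j = 0`.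
-/

open Finset
open scoped Nat

namespace IsPrimitiveRoot

variable {R : Type*} [CommRing R] [IsDomain R] {μ : R} {N : ℕ}

theorem sum_Icc_pow_mul_eq_ite (hμ : IsPrimitiveRoot μ N) (a : ℕ) :
    ∑ j ∈ Icc 1 N, μ ^ (j * a) = if N ∣ a then (N : R) else 0 := by
  have hshift : ∑ j ∈ Icc 1 N, μ ^ (j * a) = μ ^ a * ∑ j ∈ range N, (μ ^ a) ^ j := by
    rw [← Ico_add_one_right_eq_Icc, sum_Ico_eq_sum_range, mul_sum]
    refine sum_congr (by simp) fun j _ => ?_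
    rw [← pow_succ', ← pow_mul, mul_comm, Nat.add_comm]
  rw [hshift]
  split_ifs with hNa
  · simp [(hμ.pow_eq_one_iff_dvd a).mpr hNa]
  · have hne : μ ^ a - 1 ≠ 0 := sub_ne_zero.mpr fun h => hNa ((hμ.pow_eq_one_iff_dvd a).mp h)
    have hgeom : (∑ j ∈ range N, (μ ^ a) ^ j) * (μ ^ a - 1) = 0 := by
      rw [geom_sum_mul, ← pow_mul, mul_comm, pow_mul, hμ.pow_eq_one, one_pow, sub_self]
    rw [(mul_eq_zero.mp hgeom).resolve_right hne, mul_zero]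

end IsPrimitiveRoot

theorem Nat.sum_Icc_filter_dvd {M : Type*} [AddCommMonoid M] (f : ℕ → M) {d : ℕ} (hd : 0 < d)
    (n : ℕ) : ∑ k ∈ Icc 1 n with d ∣ k, f k = ∑ j ∈ Icc 1 (n / d), f (d * j) := by
  have hmultiples : {k ∈ Icc 1 n | d ∣ k} = (Icc 1 (n / d)).image (d * ·) := by
    ext k
    simp only [mem_filter, mem_Icc, mem_image, Nat.le_div_iff_mul_le hd]
    constructor
    · rintro ⟨⟨hk1, hkn⟩, j, rfl⟩
      exact ⟨j, ⟨Nat.pos_of_mul_pos_left hk1, by rwa [mul_comm]⟩, rfl⟩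
    · rintro ⟨j, ⟨hj1, hjn⟩, rfl⟩
      exact ⟨⟨Nat.mul_pos hd hj1, by rwa [mul_comm]⟩, dvd_mul_right d j⟩
  rw [hmultiples, sum_image fun i _ j _ h => Nat.eq_of_mul_eq_mul_left hd h]

theorem Nat.gcd_eq_sum_totient {n : ℕ} (hn : n ≠ 0) (k : ℕ) :
    Nat.gcd k n = ∑ d ∈ n.divisors with d ∣ k, φ d := by
  rw [← Nat.sum_totient (Nat.gcd k n),
    ← Nat.divisors_filter_dvd_of_dvd hn (Nat.gcd_dvd_right k n)]
  refine sum_congr (filter_congr fun d hd => ?_) fun _ _ => rfl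
  rw [Nat.dvd_gcd_iff, and_iff_left (Nat.dvd_of_mem_divisors hd)]

theorem Nat.totient_prime_pow_mul_pow_sub {p s j : ℕ} (hp : p.Prime) (hs : 0 < s) (hj : j ≤ s) :
    φ (p ^ j) * p ^ (s - j) = φ (p ^ s) + if j = 0 then p ^ (s - 1) else 0 := by
  obtain ⟨s, rfl⟩ := Nat.exists_eq_add_one_of_ne_zero hs.ne'
  rw [Nat.totient_prime_pow_succ hp]
  split_ifs with hj0
  · subst hj0
    have hp1 := hp.one_le
    rw [pow_zero, Nat.totient_one, one_mul, Nat.sub_zero, Nat.add_sub_cancel, pow_succ]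
    zify [hp1]
    ring
  · obtain ⟨j, rfl⟩ := Nat.exists_eq_add_one_of_ne_zero hj0
    rw [Nat.totient_prime_pow_succ hp, add_zero, show s + 1 - (j + 1) = s - j by omega,
      mul_right_comm, ← pow_add, Nat.add_sub_cancel' (by omega)]

theorem Nat.pow_dvd_mul_prod_pow_iff {ι : Type*} [Fintype ι] {p : ι → ℕ}
    (hp : ∀ i, (p i).Prime) (hpinj : Function.Injective p) (t : ι → ℕ) {u : ℕ}
    (hu : ∀ i, Nat.Coprime u (p i)) (i : ι) (c : ℕ) :
    p i ^ c ∣ u * ∏ j, p j ^ t j ↔ c ≤ t i := by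
  classical
  have hsplit : u * ∏ j, p j ^ t j = p i ^ t i * (u * ∏ j ∈ univ.erase i, p j ^ t j) := by
    rw [← mul_prod_erase univ _ (mem_univ i)]
    ring
  have hcop : Nat.Coprime (p i ^ c) (u * ∏ j ∈ univ.erase i, p j ^ t j) :=
    .pow_left _ <| .mul_right (hu i).symm <| Nat.Coprime.prod_right fun j hj => .pow_right _ <|
      (Nat.coprime_primes (hp i) (hp j)).mpr fun h => ne_of_mem_erase hj (hpinj h).symm
  rw [hsplit, hcop.dvd_mul_right, Nat.pow_dvd_pow_iff_le_right (hp i).one_lt]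

namespace ArithmeticFunction

def totient : ArithmeticFunction ℕ := ⟨Nat.totient, Nat.totient_zero⟩

theorem isMultiplicative_totient : totient.IsMultiplicative :=
  ⟨Nat.totient_one, fun h => Nat.totient_mul h⟩

def idOnDivisors (m : ℕ) : ArithmeticFunction ℕ :=
  ⟨fun e => if e ∣ m then e else 0, by simp⟩

theorem idOnDivisors_apply (m e : ℕ) : idOnDivisors m e = if e ∣ m then e else 0 := rfl

theorem isMultiplicative_idOnDivisors (m : ℕ) : (idOnDivisors m).IsMultiplicative := by
  refine ⟨by simp [idOnDivisors_apply], fun {a b} hab => ?_⟩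
  have hdvd : a * b ∣ m ↔ a ∣ m ∧ b ∣ m :=
    ⟨fun h => ⟨dvd_of_mul_right_dvd h, dvd_of_mul_left_dvd h⟩,
      fun h => hab.mul_dvd_of_dvd_of_dvd h.1 h.2⟩
  simp only [idOnDivisors_apply, hdvd, ite_and]
  split_ifs <;> simp

theorem totient_mul_idOnDivisors_apply (m n : ℕ) :
    (totient * idOnDivisors m) n = ∑ d ∈ n.divisors, φ d * if n / d ∣ m then n / d else 0 :=
  Nat.sum_divisorsAntidiagonal fun a b => totient a * idOnDivisors m b

theorem totient_mul_idOnDivisors_prime_pow {p s t m : ℕ} (hp : p.Prime) (hs : 0 < s)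
    (hm : ∀ c, p ^ c ∣ m ↔ c ≤ t) :
    (totient * idOnDivisors m) (p ^ s) =
      (min t s + 1) * φ (p ^ s) + if s ≤ t then p ^ (s - 1) else 0 := by
  have hterm : ∀ j ∈ range (s + 1),
      φ (p ^ j) * (if p ^ s / p ^ j ∣ m then p ^ s / p ^ j else 0) =
        if s - t ≤ j then φ (p ^ s) + (if j = 0 then p ^ (s - 1) else 0) else 0 := by
    intro j hj
    have hjs : j ≤ s := Nat.lt_succ_iff.mp (mem_range.mp hj)
    simp only [Nat.pow_div hjs hp.pos, hm, ← Nat.totient_prime_pow_mul_pow_sub hp hs hjs]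
    rw [mul_ite, mul_zero]
    exact if_congr (by omega) rfl rfl
  have hsupport : {j ∈ range (s + 1) | s - t ≤ j} = Ico (s - t) (s + 1) := by
    rw [range_eq_Ico, Ico_filter_le, Nat.zero_max]
  rw [totient_mul_idOnDivisors_apply, Nat.sum_divisors_prime_pow hp, sum_congr rfl hterm,
    ← sum_filter, hsupport, sum_add_distrib, sum_const, sum_ite_eq', Nat.card_Ico, smul_eq_mul,
    show s + 1 - (s - t) = min t s + 1 by omega]
  simp only [mem_Ico]
  exact congrArg _ (if_congr (by omega) rfl rfl)

end ArithmeticFunction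

open ArithmeticFunction in
theorem IsPrimitiveRoot.sum_gcd_mul_pow_eq {R : Type*} [CommRing R] [IsDomain R] {μ : R} {n : ℕ}
    (hμ : IsPrimitiveRoot μ n) (hn : n ≠ 0) (m : ℕ) :
    ∑ k ∈ Icc 1 n, (Nat.gcd k n : R) * μ ^ (k * m) = ((totient * idOnDivisors m) n : R) := by
  calc ∑ k ∈ Icc 1 n, (Nat.gcd k n : R) * μ ^ (k * m)
      = ∑ k ∈ Icc 1 n, ∑ d ∈ n.divisors with d ∣ k, (φ d : R) * μ ^ (k * m) := by
        simp only [Nat.gcd_eq_sum_totient hn, Nat.cast_sum, sum_mul]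
    _ = ∑ d ∈ n.divisors, ∑ k ∈ Icc 1 n with d ∣ k, (φ d : R) * μ ^ (k * m) :=
        sum_comm' fun k d => by simp only [mem_filter]; tauto
    _ = ∑ d ∈ n.divisors, (φ d : R) * ∑ j ∈ Icc 1 (n / d), (μ ^ d) ^ (j * m) := by
        refine sum_congr rfl fun d hd => ?_
        simp only [Nat.sum_Icc_filter_dvd _ (Nat.pos_of_mem_divisors hd), mul_sum, ← pow_mul,
          mul_assoc]
    _ = ∑ d ∈ n.divisors, (φ d : R) * if n / d ∣ m then ((n / d : ℕ) : R) else 0 := by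
        refine sum_congr rfl fun d hd => ?_
        have hμd : IsPrimitiveRoot (μ ^ d) (n / d) := hμ.pow (Nat.pos_of_ne_zero hn)
          (Nat.mul_div_cancel' (Nat.dvd_of_mem_divisors hd)).symm
        rw [hμd.sum_Icc_pow_mul_eq_ite]
    _ = _ := by
        rw [totient_mul_idOnDivisors_apply]
        push_cast
        rfl

open ArithmeticFunction in
theorem dft_gcd_prime_factorization_general (r : ℕ) (p s t : Fin r → ℕ) (u n m : ℕ)
    (hp : ∀ i, (p i).Prime) (hpinj : Function.Injective p)
    (hs : ∀ i, 1 ≤ s i)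
    (hn : n = ∏ i, p i ^ s i)
    (hm : m = u * ∏ i, p i ^ t i)
    (hu : ∀ i, Nat.Coprime u (p i)) :
    ∑ k ∈ Finset.Icc 1 n, (Nat.gcd k n : ℂ) *
        Complex.exp (-(2 * Real.pi * Complex.I * k * m / n)) =
      ∏ i, (((min (t i) (s i) + 1 : ℕ) : ℂ) * (Nat.totient (p i ^ s i) : ℂ) +
        (if s i ≤ t i then ((p i ^ (s i - 1) : ℕ) : ℂ) else 0)) := by
  have hn0 : n ≠ 0 := hn ▸ prod_ne_zero_iff.mpr fun i _ => pow_ne_zero _ (hp i).ne_zero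
  set μ := (Complex.exp (2 * Real.pi * Complex.I / n))⁻¹
  have hμ : IsPrimitiveRoot μ n := (Complex.isPrimitiveRoot_exp n hn0).inv
  have hexp : ∀ k : ℕ, Complex.exp (-(2 * Real.pi * Complex.I * k * m / n)) = μ ^ (k * m) := by
    intro k
    rw [inv_pow, ← Complex.exp_nat_mul, ← Complex.exp_neg]
    push_cast
    ring_nf
  have hcop : (↑(univ : Finset (Fin r)) : Set (Fin r)).Pairwise
      (Function.onFun Nat.Coprime fun i => p i ^ s i) := fun i _ j _ hij =>
    Nat.Coprime.pow _ _ <| (Nat.coprime_primes (hp i) (hp j)).mpr (hpinj.ne hij)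
  simp_rw [hexp, hμ.sum_gcd_mul_pow_eq hn0]
  rw [hn, (isMultiplicative_totient.mul (isMultiplicative_idOnDivisors m)).map_prod _ _ hcop]
  subst hm
  simp only [totient_mul_idOnDivisors_prime_pow (hp _) (hs _)
    (Nat.pow_dvd_mul_prod_pow_iff hp hpinj t hu _)]
  push_cast
  rfl

theorem dft_gcd_prime_factorization (r : ℕ) (p s t : Fin r → ℕ) (u n m : ℕ)
    (hp : ∀ i, (p i).Prime) (hpinj : Function.Injective p)
    (hs : ∀ i, 1 ≤ s i)
    (hn : n = ∏ i, p i ^ s i)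
    (hm : m = u * ∏ i, p i ^ t i)
    (hu : ∀ i, Nat.Coprime u (p i))
    (hm1 : 1 ≤ m) (hmn : m ≤ n) :
    ∑ k ∈ Finset.Icc 1 n, (Nat.gcd k n : ℂ) *
        Complex.exp (-(2 * Real.pi * Complex.I * k * m / n)) =
      ∏ i, (((min (t i) (s i) + 1 : ℕ) : ℂ) * (Nat.totient (p i ^ s i) : ℂ) +
        (if s i ≤ t i then ((p i ^ (s i - 1) : ℕ) : ℂ) else 0)) :=
  dft_gcd_prime_factorization_general r p s t u n m hp hpinj hs hn hm hu
end
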